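/- arXiv:2503.17929 — 2 statements merged into one kernel-verified Lean document; each statement's English description precedes it below -/
import Mathlib

section
/- Let V be a real normed space, B : V × V → ℝ a continuous symmetric bilinear map, and h : [a,b] → V a continuous function. Then 2·∫_a^b (∫_s^b B(h(s), h(u)) du) ds = B(∫_a^b h(s) ds, ∫_a^b h(s) ds). -/
/-! With `F s = ∫ u in s..b, h u`, the function `s ↦ B (F s) (F s)` vanishes at `b`, equals
`B (∫ h) (∫ h)` at `a`, and has derivative `-(B (h s) (F s) + B (F s) (h s))`, which by symmetry
is `-2 B (h s) (F s)`. Integrating over `[a, b]` and pulling `B (h s)` out of the inner integral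
gives the identity. -/

open intervalIntegral MeasureTheory Set

section

variable {V : Type*} [NormedAddCommGroup V] [NormedSpace ℝ V] [CompleteSpace V]
  {a b : ℝ} {h : ℝ → V}

theorem hasDerivAt_integral_left_of_continuousOn (hcont : ContinuousOn h (Icc a b))
    {s : ℝ} (hs : s ∈ Ioo a b) :
    HasDerivAt (fun t ↦ ∫ u in t..b, h u) (-h s) s :=
  integral_hasDerivAt_left
    ((hcont.mono (Icc_subset_Icc_left hs.1.le)).intervalIntegrable_of_Icc hs.2.le)
    ((hcont.mono Ioo_subset_Icc_self).stronglyMeasurableAtFilter isOpen_Ioo s hs)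
    (hcont.continuousAt (Icc_mem_nhds hs.1 hs.2))

theorem integral_bilinear_integral_left_add_swap
    {G : Type*} [NormedAddCommGroup G] [NormedSpace ℝ G] [CompleteSpace G]
    (B : V →L[ℝ] V →L[ℝ] G) (hab : a ≤ b) (hcont : ContinuousOn h (Icc a b)) :
    ∫ s in a..b, (B (h s) (∫ u in s..b, h u) + B (∫ u in s..b, h u) (h s)) =
      B (∫ s in a..b, h s) (∫ s in a..b, h s) := by
  set F : ℝ → V := fun s ↦ ∫ u in s..b, h u
  have hF : ContinuousOn F (Icc a b) := by
    have := continuousOn_primitive_interval_left (a := a) (b := b) (μ := volume)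
      (f := h) (by simpa [uIcc_of_le hab] using hcont.integrableOn_Icc)
    rwa [uIcc_of_le hab] at this
  have hderiv : ∀ s ∈ Ioo a b,
      HasDerivAt (fun s ↦ B (F s) (F s)) (-(B (h s) (F s) + B (F s) (h s))) s := by
    intro s hs
    have hFs := hasDerivAt_integral_left_of_continuousOn hcont hs
    convert B.hasDerivAt_of_bilinear (fun _ ↦ hFs) (fun _ ↦ hFs) using 1
    simp only [map_neg, neg_apply]
    abel
  have hint : IntervalIntegrable (fun s ↦ -(B (h s) (F s) + B (F s) (h s))) volume a b :=
    ContinuousOn.intervalIntegrable_of_Icc hab (by fun_prop)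
  have hFTC := integral_eq_sub_of_hasDerivAt_of_le hab (by fun_prop) hderiv hint
  rw [intervalIntegral.integral_neg, neg_eq_iff_eq_neg] at hFTC
  simpa [F] using hFTC

end

/-- Symmetrization identity: for a continuous symmetric bilinear map `B` and a continuous
`h : [a,b] → V`, `2 ∫_a^b ∫_s^b B(h s, h u) du ds = B(∫_a^b h, ∫_a^b h)`. -/
theorem bilinear_symmetrization_identity {V : Type*} [NormedAddCommGroup V]
    [NormedSpace ℝ V] [CompleteSpace V] (B : V →L[ℝ] V →L[ℝ] ℝ)
    (hB : ∀ x y : V, B x y = B y x) {a b : ℝ} (hab : a ≤ b)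
    (h : ℝ → V) (hcont : ContinuousOn h (Set.Icc a b)) :
    2 * ∫ s in a..b, (∫ u in s..b, B (h s) (h u)) =
      B (∫ s in a..b, h s) (∫ s in a..b, h s) := by
  rw [← integral_bilinear_integral_left_add_swap B hab hcont,
    ← intervalIntegral.integral_const_mul]
  refine integral_congr fun s hs ↦ ?_
  rw [uIcc_of_le hab] at hs
  have hint : IntervalIntegrable h volume s b :=
    (hcont.mono (Icc_subset_Icc_left hs.1)).intervalIntegrable_of_Icc hs.2
  simp only [(B (h s)).intervalIntegral_comp_comm hint, hB _ (h s)]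
  ring
end

section
/- Let (S, 𝒮, μ) be a probability space, λ > 0, N a Poisson random variable with parameter λ, and (ξ_i)_{i≥1} an i.i.d. sequence with law μ, with N and (ξ_i) all independent. Let F : S → ℂ be measurable and bounded with Re F ≥ 0 on S. Then E[exp(−Σ_{i=1}^N F(ξ_i))] = exp(λ ∫_S (e^{−F(x)} − 1) μ(dx)). -/
open MeasureTheory ProbabilityTheory

universe u

/-- The type family for a Poisson count together with an i.i.d. sequence:
`none ↦ ℕ` (the count), `some i ↦ S` (the `i`-th mark). -/
def poissonMixKind (S : Type u) : Option ℕ → Type u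
  | none => ULift ℕ
  | some _ => S

/-- Measurable space structure on `poissonMixKind S`. -/
def poissonMixMS (S : Type u) [MeasurableSpace S] :
    ∀ o : Option ℕ, MeasurableSpace (poissonMixKind S o)
  | none => (inferInstance : MeasurableSpace (ULift ℕ))
  | some _ => (inferInstance : MeasurableSpace S)

/-- The combined family of random variables: the count `N` and the marks `ξ i`. -/
def poissonMixFun {Ω : Type*} {S : Type u} (N : Ω → ℕ) (ξ : ℕ → Ω → S) :
    ∀ o : Option ℕ, Ω → poissonMixKind S o
  | none => fun ω => ULift.up (N ω)
  | some i => ξ i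

/-! Split the expectation over the events `{N = n}`. On `{N = n}` the integrand is
`∏_{i<n} e^{-F(ξ_i)}`, and independence of `N, ξ_0, …, ξ_{n-1}` factors its integral as
`P(N = n) c^n` with `c = ∫ e^{-F} dμ`; since `Re F ≥ 0` the integrand is bounded by `1`, so the
decomposition is legitimate. Against the Poisson weights the sum is an exponential series:
`∑ e^{-λ} λ^n c^n / n! = exp(λ(c - 1))`. -/

open Finset

lemma ProbabilityTheory.iIndepFun.integral_finset_prod_eq_prod_integral {Ω ι 𝕜 : Type*}
    [MeasurableSpace Ω] {μ : Measure Ω} [RCLike 𝕜] {X : ι → Ω → 𝕜}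
    (hX : iIndepFun X μ) (mX : ∀ i, AEStronglyMeasurable (X i) μ) (s : Finset ι) :
    ∫ ω, ∏ i ∈ s, X i ω ∂μ = ∏ i ∈ s, ∫ ω, X i ω ∂μ := by
  simp only [← prod_coe_sort s]
  exact (hX.precomp Subtype.val_injective).integral_fun_prod_eq_prod_integral fun i => mX i

lemma integral_eq_tsum_setIntegral_fiber {Ω β E : Type*} [MeasurableSpace Ω] {μ : Measure Ω}
    [Countable β] [MeasurableSpace β] [MeasurableSingletonClass β]
    [NormedAddCommGroup E] [NormedSpace ℝ E] {N : Ω → β} (hN : Measurable N) {f : Ω → E}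
    (hf : Integrable f μ) :
    ∫ ω, f ω ∂μ = ∑' b, ∫ ω in N ⁻¹' {b}, f ω ∂μ := by
  have hcover : ⋃ b, N ⁻¹' {b} = Set.univ := by ext; simp
  rw [← setIntegral_univ, ← hcover]
  exact integral_iUnion (fun b => hN (measurableSet_singleton b)) (pairwise_disjoint_fiber N)
    hf.integrableOn

lemma measurable_index_apply_of_countable {Ω β γ : Type*} [MeasurableSpace Ω] [MeasurableSpace β]
    [Countable β] [MeasurableSingletonClass β] [MeasurableSpace γ]
    {G : β → Ω → γ} (hG : ∀ b, Measurable (G b)) {N : Ω → β} (hN : Measurable N) :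
    Measurable fun ω => G (N ω) ω :=
  (measurable_from_prod_countable_right (f := fun p : β × Ω => G p.1 p.2) hG).comp
    (hN.prodMk measurable_id)

lemma integrable_prod_range_of_norm_le_one {Ω : Type*} [MeasurableSpace Ω] {P : Measure Ω}
    [IsFiniteMeasure P] {N : Ω → ℕ} (hN : Measurable N) {f : ℕ → Ω → ℂ}
    (hf : ∀ i, Measurable (f i)) (hf_le : ∀ i ω, ‖f i ω‖ ≤ 1) :
    Integrable (fun ω => ∏ i ∈ range (N ω), f i ω) P := by
  have hmeas := measurable_index_apply_of_countable
    (G := fun n ω => ∏ i ∈ range n, f i ω) (fun n => measurable_prod _ fun i _ => hf i) hN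
  refine .of_bound hmeas.aestronglyMeasurable 1 (ae_of_all _ fun ω => ?_)
  rw [norm_prod]
  exact prod_le_one (fun _ _ => norm_nonneg _) fun i _ => hf_le i ω

lemma Complex.norm_exp_neg_le_one {z : ℂ} (hz : 0 ≤ z.re) : ‖Complex.exp (-z)‖ ≤ 1 := by
  rw [Complex.norm_exp, Complex.neg_re, Real.exp_le_one_iff, neg_nonpos]
  exact hz

lemma hasSum_poisson_mul_pow (lam : ℝ) (z : ℂ) :
    HasSum (fun n : ℕ => ((Real.exp (-lam) * lam ^ n / n.factorial : ℝ) : ℂ) * z ^ n)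
      (Complex.exp (lam * (z - 1))) := by
  have hterm : (fun n : ℕ => ((Real.exp (-lam) * lam ^ n / n.factorial : ℝ) : ℂ) * z ^ n) =
      fun n => Complex.exp (-lam) * ((lam * z) ^ n / n.factorial) := by
    funext n
    push_cast
    ring
  rw [hterm, show (lam : ℂ) * (z - 1) = -lam + lam * z by ring, Complex.exp_add,
    Complex.exp_eq_exp_ℂ]
  exact (NormedSpace.expSeries_div_hasSum_exp ((lam : ℂ) * z)).mul_left _

theorem setIntegral_count_fiber_prod_marks {Ω : Type*} {S : Type u} [MeasurableSpace Ω]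
    [MeasurableSpace S] {P : Measure Ω} {μ : Measure S} {N : Ω → ℕ} {ξ : ℕ → Ω → S}
    (hNmeas : Measurable N) (hξmeas : ∀ i, Measurable (ξ i)) (hξ : ∀ i, P.map (ξ i) = μ)
    (hindep : iIndepFun (m := poissonMixMS S) (poissonMixFun N ξ) P)
    {g : S → ℂ} (hg : Measurable g) (n : ℕ) :
    ∫ ω in N ⁻¹' {n}, ∏ i ∈ range n, g (ξ i ω) ∂P =
      P.real (N ⁻¹' {n}) * (∫ x, g x ∂μ) ^ n := by
  have hfiber : MeasurableSet (N ⁻¹' {n}) := hNmeas (measurableSet_singleton n)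
  let φ : ∀ o : Option ℕ, poissonMixKind S o → ℂ
    | none => fun k => ({n} : Set ℕ).indicator 1 k.down
    | some _ => g
  have hφ : ∀ o, Measurable[poissonMixMS S o] (φ o) := by
    rintro (_ | i)
    · exact (measurable_const.indicator (measurableSet_singleton n)).comp measurable_down
    · exact hg
  have hYm : ∀ o, AEStronglyMeasurable (φ o ∘ poissonMixFun N ξ o) P := by
    rintro (_ | i)
    · exact (measurable_const.indicator hfiber).aestronglyMeasurable
    · exact (hg.comp (hξmeas i)).aestronglyMeasurable
  have hprod : ∫ ω, ({n} : Set ℕ).indicator 1 (N ω) * ∏ i ∈ range n, g (ξ i ω) ∂P =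
      (∫ ω, ({n} : Set ℕ).indicator 1 (N ω) ∂P) * ∏ i ∈ range n, ∫ ω, g (ξ i ω) ∂P := by
    have h := (hindep.comp φ hφ).integral_finset_prod_eq_prod_integral hYm (insertNone (range n))
    simpa only [prod_insertNone, Function.comp_apply, φ, poissonMixFun] using h
  have hcount : ∫ ω, ({n} : Set ℕ).indicator (1 : ℕ → ℂ) (N ω) ∂P = P.real (N ⁻¹' {n}) := by
    rw [show (fun ω => ({n} : Set ℕ).indicator (1 : ℕ → ℂ) (N ω)) =
      (N ⁻¹' {n}).indicator fun _ => 1 from rfl, integral_indicator_const _ hfiber]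
    simp
  have hmark : ∀ i, ∫ ω, g (ξ i ω) ∂P = ∫ x, g x ∂μ := fun i => by
    rw [← hξ i, integral_map (hξmeas i).aemeasurable hg.aestronglyMeasurable]
  calc ∫ ω in N ⁻¹' {n}, ∏ i ∈ range n, g (ξ i ω) ∂P
      = ∫ ω, ({n} : Set ℕ).indicator 1 (N ω) * ∏ i ∈ range n, g (ξ i ω) ∂P := by
        rw [← integral_indicator hfiber]
        congr with ω
        by_cases h : N ω = n <;> simp [h]
    _ = P.real (N ⁻¹' {n}) * (∫ x, g x ∂μ) ^ n := by
        rw [hprod, hcount, prod_congr rfl fun i _ => hmark i, prod_const, card_range]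

theorem campbell_formula_complex_general {Ω : Type*} {S : Type u} [MeasurableSpace Ω]
    [MeasurableSpace S]
    {P : Measure Ω} [IsProbabilityMeasure P] {μ : Measure S} [IsProbabilityMeasure μ]
    (lam : ℝ) (hlam : 0 < lam) (N : Ω → ℕ) (ξ : ℕ → Ω → S)
    (hNmeas : Measurable N) (hξmeas : ∀ i, Measurable (ξ i))
    (hN : ∀ n : ℕ, P (N ⁻¹' {n}) =
      ENNReal.ofReal (Real.exp (-lam) * lam ^ n / (n.factorial : ℝ)))
    (hξ : ∀ i, Measure.map (ξ i) P = μ)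
    (hindep : iIndepFun (m := poissonMixMS S) (poissonMixFun N ξ) P)
    (F : S → ℂ) (hFmeas : Measurable F)
    (hFre : ∀ x, 0 ≤ (F x).re) :
    ∫ ω, Complex.exp (-(∑ i ∈ Finset.range (N ω), F (ξ i ω))) ∂P =
      Complex.exp ((lam : ℂ) * ∫ x, (Complex.exp (-F x) - 1) ∂μ) := by
  set c := ∫ x, Complex.exp (-F x) ∂μ
  have hexpF : Measurable fun x => Complex.exp (-F x) := by fun_prop
  have hexp_sum : ∀ ω, Complex.exp (-∑ i ∈ range (N ω), F (ξ i ω)) =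
      ∏ i ∈ range (N ω), Complex.exp (-F (ξ i ω)) := fun ω => by
    rw [← sum_neg_distrib, Complex.exp_sum]
  have hint : Integrable (fun ω => ∏ i ∈ range (N ω), Complex.exp (-F (ξ i ω))) P :=
    integrable_prod_range_of_norm_le_one hNmeas (fun i => hexpF.comp (hξmeas i))
      fun i ω => Complex.norm_exp_neg_le_one (hFre _)
  have hfiber : ∀ n, ∫ ω in N ⁻¹' {n}, ∏ i ∈ range (N ω), Complex.exp (-F (ξ i ω)) ∂P =
      P.real (N ⁻¹' {n}) * c ^ n := fun n => by
    rw [setIntegral_congr_fun (hNmeas (measurableSet_singleton n))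
      fun ω (hω : N ω = n) => by rw [hω]]
    exact setIntegral_count_fiber_prod_marks hNmeas hξmeas hξ hindep hexpF n
  have hpoisson : ∀ n : ℕ, P.real (N ⁻¹' {n}) = Real.exp (-lam) * lam ^ n / n.factorial :=
    fun n => by rw [measureReal_def, hN n, ENNReal.toReal_ofReal (by positivity)]
  have hc : ∫ x, (Complex.exp (-F x) - 1) ∂μ = c - 1 := by
    rw [integral_sub (.of_bound hexpF.aestronglyMeasurable 1
      (ae_of_all _ fun x => Complex.norm_exp_neg_le_one (hFre x))) (integrable_const 1)]
    simp [c]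
  calc ∫ ω, Complex.exp (-∑ i ∈ range (N ω), F (ξ i ω)) ∂P
      = ∑' n, ∫ ω in N ⁻¹' {n}, ∏ i ∈ range (N ω), Complex.exp (-F (ξ i ω)) ∂P := by
        simp_rw [hexp_sum]
        exact integral_eq_tsum_setIntegral_fiber hNmeas hint
    _ = ∑' n : ℕ, ((Real.exp (-lam) * lam ^ n / n.factorial : ℝ) : ℂ) * c ^ n := by
        simp_rw [hfiber, hpoisson]
    _ = Complex.exp (lam * ∫ x, (Complex.exp (-F x) - 1) ∂μ) := by
        rw [hc, (hasSum_poisson_mul_pow lam c).tsum_eq]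

/-- Campbell's formula with complex-valued integrand for a compound Poisson sum:
if `N` is Poisson(λ), `(ξ_i)` i.i.d. with law `μ`, all independent, and `F : S → ℂ` is
bounded measurable with `Re F ≥ 0`, then
`E[exp(−Σ_{i<N} F(ξ_i))] = exp(λ ∫ (e^{−F} − 1) dμ)`. -/
theorem campbell_formula_complex {Ω : Type*} {S : Type u} [MeasurableSpace Ω]
    [MeasurableSpace S]
    {P : Measure Ω} [IsProbabilityMeasure P] {μ : Measure S} [IsProbabilityMeasure μ]
    (lam : ℝ) (hlam : 0 < lam) (N : Ω → ℕ) (ξ : ℕ → Ω → S)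
    (hNmeas : Measurable N) (hξmeas : ∀ i, Measurable (ξ i))
    (hN : ∀ n : ℕ, P (N ⁻¹' {n}) =
      ENNReal.ofReal (Real.exp (-lam) * lam ^ n / (n.factorial : ℝ)))
    (hξ : ∀ i, Measure.map (ξ i) P = μ)
    (hindep : iIndepFun (m := poissonMixMS S) (poissonMixFun N ξ) P)
    (F : S → ℂ) (hFmeas : Measurable F)
    (hFbd : ∃ C : ℝ, ∀ x, ‖F x‖ ≤ C)
    (hFre : ∀ x, 0 ≤ (F x).re) :
    ∫ ω, Complex.exp (-(∑ i ∈ Finset.range (N ω), F (ξ i ω))) ∂P =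
      Complex.exp ((lam : ℂ) * ∫ x, (Complex.exp (-F x) - 1) ∂μ) :=
  campbell_formula_complex_general lam hlam N ξ hNmeas hξmeas hN hξ hindep F hFmeas hFre
end
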